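/- arXiv:1709.08443 — 2 statements merged into one kernel-verified Lean document; each statement's English description precedes it below -/
import Mathlib

section
/- For every τ ∈ (-1,1) there exists c > 0 such that for all odd positive integers k and all real λ with |λ| < c·k, one has |sin(2π·√(λ + (k² - τ)/16))| ≥ min{(1/2)·√(1+τ), (1/2)·√(1-τ)}. -/
/-!
Write `s = √(λ + (k² - τ)/16)`. For `k ≥ 3` the square root is within `1/8` of `k/4`, so `2πs`
lies within `π/4` of the odd multiple `kπ/2` of `π/2` and `|sin(2πs)| ≥ cos(π/4) ≥ 1/2`.
For `k = 1` the argument `2πs` lies in `[0, 3π/4]`, and Jordan's inequality gives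
`sin(2πs) ≥ min(4s, 1/2)` with `4s ≳ √(1 - τ)/2`.
-/

open Real

theorem min_half_sqrt_one_add_one_sub (τ : ℝ) :
    min (1 / 2 * √(1 + τ)) (1 / 2 * √(1 - τ)) = 1 / 2 * √(1 - |τ|) := by
  rcases abs_cases τ with ⟨h, hτ⟩ | ⟨h, hτ⟩ <;> rw [h]
  · exact min_eq_right (by gcongr; linarith)
  · rw [sub_neg_eq_add]
    exact min_eq_left (by gcongr; linarith)

theorem two_div_pi_mul_min_le_sin {x : ℝ} (hx₀ : 0 ≤ x) (hxπ : x ≤ π) :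
    2 / π * min x (π - x) ≤ sin x := by
  have hπ : 0 ≤ 2 / π := by positivity
  rcases le_total x (π / 2) with hx | hx
  · exact (mul_le_mul_of_nonneg_left (min_le_left _ _) hπ).trans (mul_le_sin hx₀ hx)
  · rw [← sin_pi_sub]
    exact (mul_le_mul_of_nonneg_left (min_le_right _ _) hπ).trans
      (mul_le_sin (by linarith) (by linarith))

theorem min_four_mul_half_le_sin_two_pi_mul {s : ℝ} (hs₀ : 0 ≤ s) (hs : s ≤ 3 / 8) :
    min (4 * s) (1 / 2) ≤ sin (2 * π * s) := by
  refine le_trans ?_ (two_div_pi_mul_min_le_sin (by positivity) (by nlinarith [pi_pos]))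
  rw [mul_min_of_nonneg _ _ (by positivity : (0 : ℝ) ≤ 2 / π)]
  have hπ : π ≠ 0 := pi_ne_zero
  have h₁ : 2 / π * (2 * π * s) = 4 * s := by field_simp; ring
  have h₂ : 2 / π * (π - 2 * π * s) = 2 - 4 * s := by field_simp; ring
  rw [h₁, h₂]
  exact min_le_min_left _ (by linarith)

theorem abs_sqrt_sub_le {a : ℝ} (ha : 0 < a) (x : ℝ) : |√x - a| ≤ |x - a ^ 2| / a := by
  rw [le_div_iff₀ ha]
  rcases le_total 0 x with hx | hx
  · have hfactor : |x - a ^ 2| = |√x - a| * (√x + a) := by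
      rw [← abs_of_pos (by positivity : 0 < √x + a), ← abs_mul]
      congr 1
      nlinarith [sq_sqrt hx]
    rw [hfactor]
    gcongr
    linarith [sqrt_nonneg x]
  · rw [sqrt_eq_zero'.mpr hx, zero_sub, abs_neg, abs_of_pos ha, abs_of_neg (by nlinarith)]
    nlinarith

theorem half_le_abs_sin_two_pi_mul {k : ℕ} (hk : Odd k) {s : ℝ} (hs : |s - k / 4| ≤ 1 / 8) :
    1 / 2 ≤ |sin (2 * π * s)| := by
  obtain ⟨m, rfl⟩ := hk
  set θ := 2 * π * (s - (2 * m + 1 : ℕ) / 4)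
  -- `2πs = θ + π/2 + mπ`
  have hsin : sin (2 * π * s) = (-1) ^ m * cos θ := by
    rw [← sin_add_pi_div_two, ← sin_add_nat_mul_pi]
    congr 1
    push_cast [θ]
    ring
  have hθ : |θ| ≤ π / 4 := by
    rw [abs_mul, abs_of_pos (by positivity : (0 : ℝ) < 2 * π)]
    nlinarith [pi_pos]
  have hθsq : θ ^ 2 ≤ 1 := by
    rw [← sq_abs]
    nlinarith [abs_nonneg θ, pi_le_four]
  rw [hsin, abs_mul, abs_pow, abs_neg, abs_one, one_pow, one_mul]
  nlinarith [one_sub_sq_div_two_le_cos (x := θ), le_abs_self (cos θ)]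

theorem half_sqrt_le_abs_sin_of_eq_one {τ δ lam : ℝ} (hτ : -1 < τ) (hδτ : δ ≤ 1 - τ)
    (hδ : δ ≤ 1) (hlam : |lam| < δ / 100) :
    1 / 2 * √δ ≤ |sin (2 * π * √(lam + (1 - τ) / 16))| := by
  obtain ⟨hlam₁, hlam₂⟩ := abs_lt.mp hlam
  have hδ₀ : 0 ≤ δ := by linarith [abs_nonneg lam]
  set s := √(lam + (1 - τ) / 16)
  have hs_le : s ≤ 3 / 8 := (sqrt_le_left (by norm_num)).mpr (by linarith)
  have hs_ge : √δ / 8 ≤ s :=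
    (le_sqrt (by positivity) (by linarith)).mpr (by rw [div_pow, sq_sqrt hδ₀]; linarith)
  have hsqrtδ : √δ ≤ 1 := sqrt_le_one.mpr hδ
  calc 1 / 2 * √δ ≤ min (4 * s) (1 / 2) := le_min (by linarith) (by linarith)
    _ ≤ sin (2 * π * s) := min_four_mul_half_le_sin_two_pi_mul (sqrt_nonneg _) hs_le
    _ ≤ |sin (2 * π * s)| := le_abs_self _

theorem half_le_abs_sin_of_three_le {τ lam : ℝ} (hτ : |τ| ≤ 1) {k : ℕ} (hk : Odd k)
    (hk₃ : 3 ≤ k) (hlam : |lam| < k / 100) :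
    1 / 2 ≤ |sin (2 * π * √(lam + ((k : ℝ) ^ 2 - τ) / 16))| := by
  have hk₃' : (3 : ℝ) ≤ k := by exact_mod_cast hk₃
  refine half_le_abs_sin_two_pi_mul hk ((abs_sqrt_sub_le (by positivity) _).trans ?_)
  rw [div_le_iff₀ (by positivity)]
  have hshift : lam + ((k : ℝ) ^ 2 - τ) / 16 - (k / 4) ^ 2 = lam + -(τ / 16) := by ring
  rw [hshift]
  have := abs_add_le lam (-(τ / 16))
  rw [abs_neg, abs_div, abs_of_pos (by norm_num : (0 : ℝ) < 16)] at this
  linarith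

theorem stmt_0 (τ : ℝ) (hτ : τ ∈ Set.Ioo (-1 : ℝ) 1) :
    ∃ c > (0 : ℝ), ∀ k : ℕ, Odd k → 0 < k → ∀ lam : ℝ, |lam| < c * k →
      min ((1 / 2) * Real.sqrt (1 + τ)) ((1 / 2) * Real.sqrt (1 - τ)) ≤
        |Real.sin (2 * π * Real.sqrt (lam + ((k : ℝ) ^ 2 - τ) / 16))| := by
  have hτ' : |τ| < 1 := abs_lt.mpr hτ
  refine ⟨(1 - |τ|) / 100, by linarith, fun k hk _ lam hlam => ?_⟩
  rw [min_half_sqrt_one_add_one_sub]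
  obtain ⟨m, rfl⟩ := hk
  rcases Nat.eq_zero_or_pos m with rfl | hm
  · push_cast at hlam ⊢
    rw [one_pow]
    exact half_sqrt_le_abs_sin_of_eq_one hτ.1 (by linarith [le_abs_self τ])
      (by linarith [abs_nonneg τ]) (by linarith)
  · have hlam' : |lam| < ((2 * m + 1 : ℕ) : ℝ) / 100 := by
      refine hlam.trans_le ?_
      rw [div_mul_eq_mul_div]
      gcongr
      nlinarith [abs_nonneg τ]
    calc 1 / 2 * √(1 - |τ|) ≤ 1 / 2 := by
          linarith [sqrt_le_one.mpr (by linarith [abs_nonneg τ] : 1 - |τ| ≤ 1)]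
      _ ≤ _ := half_le_abs_sin_of_three_le hτ'.le ⟨m, rfl⟩ (by omega) hlam'
end

section
/- Let f : ℝ × ℝ → ℝ be continuous, odd in the second variable, with f(x,s) = o(s) as s → 0 uniformly in x, and such that s ↦ f(x,s)/|s| is strictly increasing on (-∞,0) and (0,∞) for each x. Then for all x ∈ ℝ and all s ≠ 0, f(x,s)·s > 2·F(x,s) > 0, where F(x,s) = ∫₀ˢ f(x,t) dt. -/
/-!
Fix `x` and write `g = f x`. For `0 < t < s` monotonicity gives `g t < (g s / s) t`, and
integrating over `[0, s]` yields `2 ∫₀ˢ g < (g s / s) s² = g s · s`. Since `g t / t → 0` as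
`t → 0⁺` and `g t / t` is strictly increasing, `g > 0` on `(0, ∞)`, so `∫₀ˢ g > 0`.
Oddness of `g` makes both `g s · s` and `∫₀ˢ g` even in `s`, which reduces `s < 0` to `s > 0`.
-/

open MeasureTheory Filter Topology Set intervalIntegral

section

variable {g : ℝ → ℝ}

lemma pos_of_strictMonoOn_div_of_tendsto (hmono : StrictMonoOn (fun t => g t / t) (Ioi 0))
    (hlim : Tendsto (fun t => g t / t) (𝓝[>] 0) (𝓝 0)) {t : ℝ} (ht : 0 < t) : 0 < g t := by
  have hhalf : 0 < t / 2 := half_pos ht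
  have hhalf_nonneg : 0 ≤ g (t / 2) / (t / 2) := by
    refine le_of_tendsto hlim ?_
    filter_upwards [Ioo_mem_nhdsGT hhalf] with τ hτ
    exact (hmono hτ.1 hhalf hτ.2).le
  exact (div_pos_iff_of_pos_right ht).1 (hhalf_nonneg.trans_lt (hmono hhalf ht (half_lt_self ht)))

lemma two_mul_integral_lt_mul_self {s : ℝ} (hg : IntervalIntegrable g volume 0 s)
    (hmono : StrictMonoOn (fun t => g t / t) (Ioi 0)) (hs : 0 < s) :
    2 * ∫ t in 0..s, g t < g s * s := by
  set c := g s / s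
  have hbelow : ∀ t ∈ Ioo 0 s, 0 < c * t - g t := fun t ht => by
    have := hmono ht.1 hs ht.2
    rw [div_lt_iff₀ ht.1] at this
    linarith
  have hlin : IntervalIntegrable (fun t => c * t) volume 0 s :=
    (continuous_const.mul continuous_id).intervalIntegrable _ _
  have hgap := intervalIntegral_pos_of_pos_on (hlin.sub hg) hbelow hs
  rw [intervalIntegral.integral_sub hlin hg, intervalIntegral.integral_const_mul,
    integral_id] at hgap
  have hcs : g s * s = c * s ^ 2 := by rw [← div_mul_cancel₀ (g s) hs.ne']; ring
  linarith

lemma integral_zero_neg_of_odd (hodd : ∀ t, g (-t) = -g t) (s : ℝ) :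
    ∫ t in 0..-s, g t = ∫ t in 0..s, g t := by
  have h := integral_comp_neg (a := 0) (b := s) g
  simp only [hodd, intervalIntegral.integral_neg, neg_zero] at h
  rw [integral_symm 0 (-s)] at h
  linarith

end

/-- Under (H2), (H3): `f` continuous, odd in `s`, `f(x,s) = o(s)` as `s → 0`
uniformly in `x`, and `s ↦ f(x,s)/|s|` strictly increasing on each half-line,
one has `f(x,s)·s > 2F(x,s) > 0` for `s ≠ 0`, where `F(x,s) = ∫₀ˢ f(x,t) dt`. -/
theorem stmt_15 (f : ℝ → ℝ → ℝ) (hf_cont : Continuous (fun p : ℝ × ℝ => f p.1 p.2))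
    (hodd : ∀ x s, f x (-s) = -f x s)
    (hsmall : ∀ ε > (0 : ℝ), ∃ δ > (0 : ℝ), ∀ x s : ℝ, |s| < δ → |f x s| ≤ ε * |s|)
    (hmono : ∀ x : ℝ, StrictMonoOn (fun s => f x s / |s|) (Set.Iio (0 : ℝ)) ∧
      StrictMonoOn (fun s => f x s / |s|) (Set.Ioi (0 : ℝ))) :
    ∀ x s : ℝ, s ≠ 0 →
      f x s * s > 2 * (∫ t in (0 : ℝ)..s, f x t) ∧
      (0 : ℝ) < 2 * (∫ t in (0 : ℝ)..s, f x t) := by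
  intro x s hs
  have hcont : Continuous (f x) := hf_cont.comp (Continuous.prodMk_right x)
  have hmono_pos : StrictMonoOn (fun t => f x t / t) (Ioi 0) :=
    (hmono x).2.congr fun t ht => by simp only [abs_of_pos (mem_Ioi.1 ht)]
  have hlittle : f x =o[𝓝 0] id := Asymptotics.isLittleO_iff.2 fun ε hε => by
    obtain ⟨δ, hδ, h⟩ := hsmall ε hε
    filter_upwards [Metric.ball_mem_nhds 0 hδ] with t ht
    simpa [Real.norm_eq_abs] using h x t (by simpa using ht)
  have hlim : Tendsto (fun t => f x t / t) (𝓝[>] 0) (𝓝 0) :=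
    (hlittle.mono nhdsWithin_le_nhds).tendsto_div_nhds_zero
  have key : ∀ r, 0 < r →
      f x r * r > 2 * ∫ t in 0..r, f x t ∧ 0 < 2 * ∫ t in 0..r, f x t :=
    fun r hr => ⟨two_mul_integral_lt_mul_self (hcont.intervalIntegrable _ _) hmono_pos hr,
      mul_pos two_pos <| intervalIntegral_pos_of_pos_on (hcont.intervalIntegrable _ _)
        (fun t ht => pos_of_strictMonoOn_div_of_tendsto hmono_pos hlim ht.1) hr⟩
  rcases hs.lt_or_gt with hneg | hpos
  · simpa only [integral_zero_neg_of_odd (hodd x), hodd, neg_mul_neg] using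
      key (-s) (neg_pos.2 hneg)
  · exact key s hpos
end
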